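/- arXiv:2010.03185 — 3 statements merged into one kernel-verified Lean document; each statement's English description precedes it below -/
import Mathlib

section
/- Correctness of the unfolding translation for EU: let K=(V,E,ℓ) be a finite Kripke structure with total E. Define, for states x and sets X ⊆ V with x ∈ X, the predicate T(x,X) by T(x,X) = (K,x ⊨ ψ) ∨ ((K,x ⊨ φ) ∧ ∃x' . (x,x') ∈ E ∧ x' ∉ X ∧ T(x', X ∪ {x'})) (well-founded recursion on |V| − |X|). Then K,x ⊨ E φ U ψ iff T(x, {x}). -/
/-- `K, x ⊨ E φ U ψ` (structure semantics over infinite paths). -/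
def SatEU {V : Type*} (E : V → V → Prop) (φ ψ : V → Prop) (x : V) : Prop :=
  ∃ ρ : ℕ → V, (∀ i, E (ρ i) (ρ (i + 1))) ∧ ρ 0 = x ∧
    ∃ i, ψ (ρ i) ∧ ∀ j < i, φ (ρ j)

/-- Unfolding predicate for `EU`:
`T(x,X) = (x ⊨ ψ) ∨ ((x ⊨ φ) ∧ ∃x'. (x,x') ∈ E ∧ x' ∉ X ∧ T(x', X ∪ {x'}))`,
by well-founded recursion on `|V| − |X|`. -/
def TUnf {V : Type*} [Fintype V] [DecidableEq V] (E : V → V → Prop)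
    (φ ψ : V → Prop) (x : V) (X : Finset V) : Prop :=
  ψ x ∨ (φ x ∧ ∃ x', E x x' ∧ ∃ _ : x' ∉ X, TUnf E φ ψ x' (insert x' X))
termination_by Fintype.card V - X.card
decreasing_by
  rename_i hx'
  have h1 := Finset.card_insert_of_notMem hx'
  have h2 := Finset.card_le_univ (insert x' X)
  omega

/-!
Both sides are equivalent to the existence of a finite witness: a `φ`-path reaching `ψ` after
exactly `n` steps. An infinite path yields such a witness by truncation, and totality of `E`
extends a witness back to an infinite path. Since `T(x, X)` only follows fresh states, the point
is that shortest witnesses are simple: if no visited state has a witness shorter than `n` and the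
current one has one of length exactly `n`, its successor on that witness has one of length
`n - 1` and so is fresh.
-/

def SatEUAt {V : Type*} (E : V → V → Prop) (φ ψ : V → Prop) : ℕ → V → Prop
  | 0, x => ψ x
  | n + 1, x => φ x ∧ ∃ y, E x y ∧ SatEUAt E φ ψ n y

section

variable {V : Type*} {E : V → V → Prop} {φ ψ : V → Prop}

theorem exists_path_of_total (hE : ∀ v, ∃ w, E v w) (x : V) :
    ∃ ρ : ℕ → V, (∀ i, E (ρ i) (ρ (i + 1))) ∧ ρ 0 = x := by
  choose next hnext using hE
  exact ⟨fun i => Nat.rec x (fun _ v => next v) i, fun i => hnext _, rfl⟩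

theorem satEU_of_edge {x y : V} (hφ : φ x) (hxy : E x y) (hy : SatEU E φ ψ y) :
    SatEU E φ ψ x := by
  obtain ⟨ρ, hρ, rfl, i, hψ, hφρ⟩ := hy
  refine ⟨fun | 0 => x | k + 1 => ρ k, fun | 0 => hxy | k + 1 => hρ k, rfl, i + 1, hψ, ?_⟩
  rintro (_ | j) hj
  exacts [hφ, hφρ j (by omega)]

theorem satEU_of_satEUAt (hE : ∀ v, ∃ w, E v w) :
    ∀ {n : ℕ} {x : V}, SatEUAt E φ ψ n x → SatEU E φ ψ x
  | 0, x, hψ => by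
    obtain ⟨ρ, hρ, hρ0⟩ := exists_path_of_total hE x
    exact ⟨ρ, hρ, hρ0, 0, hρ0 ▸ hψ, nofun⟩
  | _ + 1, _, ⟨hφ, _, hxy, hy⟩ => satEU_of_edge hφ hxy (satEU_of_satEUAt hE hy)

theorem satEUAt_of_path {ρ : ℕ → V} (hρ : ∀ i, E (ρ i) (ρ (i + 1))) :
    ∀ {n : ℕ}, ψ (ρ n) → (∀ j < n, φ (ρ j)) → SatEUAt E φ ψ n (ρ 0)
  | 0, hψ, _ => hψ
  | n + 1, hψ, hφ =>
    ⟨hφ 0 n.succ_pos, ρ 1, hρ 0,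
      satEUAt_of_path (ρ := fun i => ρ (i + 1)) (fun i => hρ (i + 1)) hψ
        (fun j hj => hφ (j + 1) (by omega))⟩

theorem satEU_iff_exists_satEUAt (hE : ∀ v, ∃ w, E v w) {x : V} :
    SatEU E φ ψ x ↔ ∃ n, SatEUAt E φ ψ n x := by
  constructor
  · rintro ⟨ρ, hρ, rfl, n, hψ, hφ⟩
    exact ⟨n, satEUAt_of_path hρ hψ hφ⟩
  · rintro ⟨n, hn⟩
    exact satEU_of_satEUAt hE hn

variable [Fintype V] [DecidableEq V]

theorem card_sub_card_insert_lt {X : Finset V} {y : V} (hy : y ∉ X) :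
    Fintype.card V - (insert y X).card < Fintype.card V - X.card := by
  have := Finset.card_le_univ (insert y X)
  rw [Finset.card_insert_of_notMem hy] at this ⊢
  omega

theorem exists_satEUAt_of_tUnf {x : V} {X : Finset V} (h : TUnf E φ ψ x X) :
    ∃ n, SatEUAt E φ ψ n x := by
  rw [TUnf] at h
  rcases h with hψ | ⟨hφ, y, hxy, hy, hT⟩
  · exact ⟨0, hψ⟩
  · obtain ⟨n, hn⟩ := exists_satEUAt_of_tUnf hT
    exact ⟨n + 1, hφ, y, hxy, hn⟩
termination_by Fintype.card V - X.card
decreasing_by exact card_sub_card_insert_lt hy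

theorem tUnf_of_satEUAt :
    ∀ {n : ℕ} {x : V} {X : Finset V}, x ∈ X → (∀ y ∈ X, ∀ m < n, ¬ SatEUAt E φ ψ m y) →
      SatEUAt E φ ψ n x → TUnf E φ ψ x X
  | 0, x, X, _, _, hψ => by
    rw [TUnf]
    exact Or.inl hψ
  | n + 1, x, X, hx, hmin, ⟨hφ, y, hxy, hy⟩ => by
    have hyX : y ∉ X := fun hyX => hmin y hyX n n.lt_succ_self hy
    have hmin' : ∀ z ∈ insert y X, ∀ m < n, ¬ SatEUAt E φ ψ m z := by
      rintro z hz m hm hzm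
      rcases Finset.mem_insert.mp hz with rfl | hzX
      · exact hmin x hx (m + 1) (by omega) ⟨hφ, z, hxy, hzm⟩
      · exact hmin z hzX m (by omega) hzm
    rw [TUnf]
    exact Or.inr ⟨hφ, y, hxy, hyX, tUnf_of_satEUAt (Finset.mem_insert_self y X) hmin' hy⟩

theorem tUnf_singleton_iff {x : V} : TUnf E φ ψ x {x} ↔ ∃ n, SatEUAt E φ ψ n x := by
  classical
  refine ⟨exists_satEUAt_of_tUnf, fun h => ?_⟩
  refine tUnf_of_satEUAt (Finset.mem_singleton_self x) ?_ (Nat.find_spec h)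
  rintro y hy m hm
  rw [Finset.mem_singleton.mp hy]
  exact Nat.find_min h hm

end

/-- Correctness of the unfolding translation for `EU`:
`K, x ⊨ E φ U ψ` iff `T(x, {x})`. -/
theorem eu_unfolding_correct {V : Type*} [Fintype V] [DecidableEq V]
    (E : V → V → Prop) (hE : ∀ v, ∃ w, E v w) (φ ψ : V → Prop) (x : V) :
    SatEU E φ ψ x ↔ TUnf E φ ψ x {x} :=
  (satEU_iff_exists_satEUAt hE).trans tUnf_singleton_iff.symm
end

section
/- Correctness of the unfolding translation for AU: let K=(V,E,ℓ) be a finite Kripke structure with total E. Define, for states x and sets X ⊆ V with x ∈ X, the predicate S(x,X) by: if some successor x' of x is in X then S(x,X) = (K,x ⊨ ψ); otherwise S(x,X) = (K,x ⊨ ψ) ∨ ((K,x ⊨ φ) ∧ ∀x'. (x,x') ∈ E → S(x', X ∪ {x'})) (well-founded recursion on |V| − |X|). Then K,x ⊨ A φ U ψ iff S(x, {x}). -/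
/-- `K, x ⊨ A φ U ψ` (structure semantics over infinite paths). -/
def SatAU {V : Type*} (E : V → V → Prop) (φ ψ : V → Prop) (x : V) : Prop :=
  ∀ ρ : ℕ → V, (∀ i, E (ρ i) (ρ (i + 1))) → ρ 0 = x →
    ∃ i, ψ (ρ i) ∧ ∀ j < i, φ (ρ j)

open Classical in
/-- Unfolding predicate for `AU`: if some successor of `x` is in `X` then
`S(x,X) = (x ⊨ ψ)`; otherwise
`S(x,X) = (x ⊨ ψ) ∨ ((x ⊨ φ) ∧ ∀x'. (x,x') ∈ E → S(x', X ∪ {x'}))`,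
by well-founded recursion on `|V| − |X|`. -/
noncomputable def SUnf {V : Type*} [Fintype V] [DecidableEq V] (E : V → V → Prop)
    (φ ψ : V → Prop) (x : V) (X : Finset V) : Prop :=
  if h : ∃ x', E x x' ∧ x' ∈ X then ψ x
  else ψ x ∨ (φ x ∧ ∀ x', E x x' → SUnf E φ ψ x' (insert x' X))
termination_by Fintype.card V - X.card
decreasing_by
  rename_i hE'
  have hx' : x' ∉ X := fun hm => h ⟨x', hE', hm⟩
  have h1 := Finset.card_insert_of_notMem hx'
  have h2 := Finset.card_le_univ (insert x' X)
  try simp [Finset.card_univ] at h2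
  omega

/-!
Along a branch of the unfolding, `X` is the set of states visited so far and every earlier state
of the branch reaches the current one through states where `ψ` fails. A transition back into
`X` therefore closes a cycle avoiding `ψ`, and the infinite path around it refutes `A φ U ψ`
unless `ψ` holds at the current state; this justifies cutting the recursion there. Otherwise
`S` unfolds exactly like the fixpoint equation `A φ U ψ ≡ ψ ∨ (φ ∧ AX A φ U ψ)`, which is where
totality of `E` enters.
-/

open Relation

section AU

variable {V : Type*} {E : V → V → Prop} {φ ψ : V → Prop}

theorem exists_path_of_forall_exists_succ {S : Set V} (hS : ∀ z ∈ S, ∃ z' ∈ S, E z z')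
    {y : V} (hy : y ∈ S) :
    ∃ ρ : ℕ → V, (∀ i, E (ρ i) (ρ (i + 1))) ∧ ρ 0 = y ∧ ∀ i, ρ i ∈ S := by
  choose next hnext_mem hnext_step using hS
  let step : S → S := fun z => ⟨next z z.2, hnext_mem z z.2⟩
  refine ⟨fun i => (step^[i] ⟨y, hy⟩ : V), fun i => ?_, rfl, fun i => (step^[i] ⟨y, hy⟩).2⟩
  simp only [Function.iterate_succ_apply']
  exact hnext_step _ _

theorem not_satAU_of_forall_exists_succ {S : Set V} (hS : ∀ z ∈ S, ¬ψ z ∧ ∃ z' ∈ S, E z z')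
    {y : V} (hy : y ∈ S) : ¬SatAU E φ ψ y := by
  intro hsat
  obtain ⟨ρ, hρ, hρ0, hρS⟩ := exists_path_of_forall_exists_succ (fun z hz => (hS z hz).2) hy
  obtain ⟨i, hψ, -⟩ := hsat ρ hρ hρ0
  exact (hS _ (hρS i)).1 hψ

theorem satAU_of_right {y : V} (hψ : ψ y) : SatAU E φ ψ y :=
  fun _ _ hρ0 => ⟨0, hρ0 ▸ hψ, by simp⟩

theorem satAU_iff (hE : ∀ v, ∃ w, E v w) {y : V} :
    SatAU E φ ψ y ↔ ψ y ∨ (φ y ∧ ∀ y', E y y' → SatAU E φ ψ y') := by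
  refine ⟨fun hsat => or_iff_not_imp_left.2 fun hψ => ⟨?_, fun y' hyy' ρ hρ hρ0 => ?_⟩, ?_⟩
  · obtain ⟨ρ, hρ, hρ0, -⟩ :=
      exists_path_of_forall_exists_succ (S := Set.univ) (fun z _ => by simpa using hE z) trivial
    obtain ⟨_ | i, hψi, hφ⟩ := hsat ρ hρ hρ0
    · exact absurd (hρ0 ▸ hψi) hψ
    · exact hρ0 ▸ hφ 0 i.succ_pos
  · let ρ' : ℕ → V := fun | 0 => y | i + 1 => ρ i
    have hρ' : ∀ i, E (ρ' i) (ρ' (i + 1))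
      | 0 => show E y (ρ 0) from hρ0 ▸ hyy'
      | i + 1 => hρ i
    obtain ⟨_ | i, hψi, hφ⟩ := hsat ρ' hρ' rfl
    · exact absurd hψi hψ
    · exact ⟨i, hψi, fun j hj => hφ (j + 1) (by omega)⟩
  · rintro (hψ | ⟨hφ, hnext⟩) ρ hρ hρ0
    · exact satAU_of_right hψ ρ hρ hρ0
    · obtain ⟨i, hψi, hφi⟩ :=
        hnext (ρ 1) (hρ0 ▸ hρ 0) (fun i => ρ (i + 1)) (fun i => hρ (i + 1)) rfl
      exact ⟨i + 1, hψi, Nat.forall_lt_succ_left.2 ⟨hρ0 ▸ hφ, hφi⟩⟩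

variable (E ψ) in
def PendingStep (a b : V) : Prop := E a b ∧ ¬ψ a

theorem not_satAU_of_transGen_pendingStep {y : V} (hcycle : TransGen (PendingStep E ψ) y y) :
    ¬SatAU E φ ψ y := by
  refine not_satAU_of_forall_exists_succ (S := {z | TransGen (PendingStep E ψ) z z}) ?_ hcycle
  intro z hz
  obtain ⟨z', ⟨hzz', hψ⟩, hz'z⟩ := TransGen.head'_iff.1 hz
  exact ⟨hψ, z', TransGen.tail' hz'z ⟨hzz', hψ⟩, hzz'⟩

theorem sUnf_iff_satAU [Fintype V] [DecidableEq V] (hE : ∀ v, ∃ w, E v w) (X : Finset V) (y : V)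
    (hX : ∀ z ∈ X, ReflTransGen (PendingStep E ψ) z y) :
    SUnf E φ ψ y X ↔ SatAU E φ ψ y := by
  rw [SUnf]
  split_ifs with hback
  · obtain ⟨y', hyy', hy'X⟩ := hback
    refine ⟨satAU_of_right, fun hsat => by_contra fun hψ => ?_⟩
    exact not_satAU_of_transGen_pendingStep (TransGen.head' ⟨hyy', hψ⟩ (hX y' hy'X)) hsat
  · rw [satAU_iff hE]
    refine or_congr_right' fun hψ => and_congr_right fun _ => forall₂_congr fun y' hyy' => ?_
    refine sUnf_iff_satAU hE (insert y' X) y' fun z hz => ?_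
    rcases Finset.mem_insert.1 hz with rfl | hz
    · exact ReflTransGen.refl
    · exact (hX z hz).tail ⟨hyy', hψ⟩
termination_by Fintype.card V - X.card
decreasing_by
  have hy' : y' ∉ X := fun h => hback ⟨y', hyy', h⟩
  have := Finset.card_insert_of_notMem hy'
  have := Finset.card_lt_univ_of_notMem hy'
  omega

end AU

/-- Correctness of the unfolding translation for `AU`:
`K, x ⊨ A φ U ψ` iff `S(x, {x})`. -/
theorem au_unfolding_correct {V : Type*} [Fintype V] [DecidableEq V]
    (E : V → V → Prop) (hE : ∀ v, ∃ w, E v w) (φ ψ : V → Prop) (x : V) :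
    SatAU E φ ψ x ↔ SUnf E φ ψ x {x} :=
  (sUnf_iff_satAU hE {x} x fun _ hz => Finset.mem_singleton.1 hz ▸ .refl).symm
end

section
/- Distance-based characterization of EU: let K=(V,E,ℓ) be a finite Kripke structure with total E and let n = |V|. Then K,x ⊨ E φ U ψ iff there exists a function d : V → {0,1,…,n} such that d(x) < n and for every state y: if d(y) = 0 then K,y ⊨ ψ, and if 1 ≤ d(y) < n then K,y ⊨ φ and some successor y' of y has d(y') = d(y) − 1. -/
section Aux

attribute [local instance] Classical.propDecidable

variable {V : Type*} {E : V → V → Prop} {φ ψ : V → Prop}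

/-- A finite `φ`-path of length `m` from `y` ending in a `ψ`-state. -/
def PathTo (E : V → V → Prop) (φ ψ : V → Prop) (y : V) (m : ℕ) : Prop :=
  ∃ σ : ℕ → V, σ 0 = y ∧ (∀ k < m, E (σ k) (σ (k + 1))) ∧ ψ (σ m) ∧ ∀ k < m, φ (σ k)

lemma pathTo_prepend {y y' : V} {m : ℕ} (h : PathTo E φ ψ y' m)
    (hEy : E y y') (hφy : φ y) : PathTo E φ ψ y (m + 1) := by
  obtain ⟨σ, h0, hedge, hψ, hφ'⟩ := h
  refine ⟨fun k => Nat.rec y (fun k _ => σ k) k, rfl, ?_, hψ, ?_⟩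
  · intro k hk
    cases k with
    | zero => show E y (σ 0); rw [h0]; exact hEy
    | succ k => exact hedge k (by omega)
  · intro k hk
    cases k with
    | zero => exact hφy
    | succ k => exact hφ' k (by omega)

lemma pathTo_step {y : V} (h : ∃ m, PathTo E φ ψ y m) (h1 : 1 ≤ Nat.find h) :
    φ y ∧ ∃ y', E y y' ∧ ∃ h' : ∃ m, PathTo E φ ψ y' m, Nat.find h' = Nat.find h - 1 := by
  obtain ⟨σ, h0, hedge, hψ, hφ'⟩ := Nat.find_spec h
  set m := Nat.find h with hm
  have hφy : φ y := by rw [← h0]; exact hφ' 0 h1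
  have hEy : E y (σ 1) := by rw [← h0]; exact hedge 0 h1
  have hp : PathTo E φ ψ (σ 1) (m - 1) := by
    refine ⟨fun k => σ (k + 1), rfl, ?_, ?_, ?_⟩
    · intro k hk; exact hedge (k + 1) (by omega)
    · have hmm : m - 1 + 1 = m := by omega
      show ψ (σ (m - 1 + 1)); rw [hmm]; exact hψ
    · intro k hk; exact hφ' (k + 1) (by omega)
  have h' : ∃ m, PathTo E φ ψ (σ 1) m := ⟨_, hp⟩
  refine ⟨hφy, σ 1, hEy, h', ?_⟩
  have hle : Nat.find h' ≤ m - 1 := Nat.find_le hp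
  have hge : m ≤ Nat.find h' + 1 :=
    Nat.find_le (pathTo_prepend (Nat.find_spec h') hEy hφy)
  omega

lemma find_lt_card [Fintype V] {y : V} (h : ∃ m, PathTo E φ ψ y m) :
    Nat.find h < Fintype.card V := by
  classical
  have hcl : ∀ m (y : V) (h : ∃ m, PathTo E φ ψ y m), Nat.find h = m →
      ∀ v ≤ m, ∃ z, ∃ h' : ∃ m, PathTo E φ ψ z m, Nat.find h' = v := by
    intro m
    induction m using Nat.strong_induction_on with
    | _ m ih =>
      intro y h hm v hv
      rcases eq_or_lt_of_le hv with rfl | hlt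
      · exact ⟨y, h, hm⟩
      · have h1 : 1 ≤ Nat.find h := by omega
        obtain ⟨-, y', -, h', hfind⟩ := pathTo_step h h1
        exact ih (m - 1) (by omega) y' h' (by omega) v (by omega)
  set m := Nat.find h with hm
  have key := hcl m y h rfl
  set D : V → ℕ := fun z => if h' : ∃ m, PathTo E φ ψ z m then Nat.find h' else 0 with hD
  have hg : ∀ v : Fin (m + 1), ∃ z : V, D z = (v : ℕ) := by
    intro v
    obtain ⟨z, h', hz⟩ := key v (by omega)
    exact ⟨z, by rw [hD]; simp only [dif_pos h']; exact hz⟩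
  choose g hgspec using hg
  have hginj : Function.Injective g := by
    intro a b hab
    have : (a : ℕ) = (b : ℕ) := by rw [← hgspec a, ← hgspec b, hab]
    exact Fin.ext this
  have := Fintype.card_le_of_injective g hginj
  simpa using this

end Aux

/-- Distance-based characterization of `EU` (with `n = |V|`):
`K, x ⊨ E φ U ψ` iff there is `d : V → {0,…,n}` with `d(x) < n` such that
`d(y) = 0` implies `y ⊨ ψ`, and `1 ≤ d(y) < n` implies `y ⊨ φ` and some successor
`y'` of `y` has `d(y') = d(y) − 1`. -/
theorem eu_distance_characterization {V : Type*} [Fintype V] (E : V → V → Prop)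
    (hE : ∀ v, ∃ w, E v w) (φ ψ : V → Prop) (x : V) :
    SatEU E φ ψ x ↔
      ∃ d : V → ℕ, (∀ y, d y ≤ Fintype.card V) ∧ d x < Fintype.card V ∧
        ∀ y, (d y = 0 → ψ y) ∧
          (1 ≤ d y → d y < Fintype.card V →
            φ y ∧ ∃ y', E y y' ∧ d y' = d y - 1) := by
  classical
  have hpos : 0 < Fintype.card V := Fintype.card_pos_iff.mpr ⟨x⟩
  constructor
  · rintro ⟨ρ, hρE, hρ0, i, hψi, hφi⟩
    have hRx : ∃ m, PathTo E φ ψ x m :=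
      ⟨i, ρ, hρ0, fun k _ => hρE k, hψi, hφi⟩
    refine ⟨fun y => if h : ∃ m, PathTo E φ ψ y m then Nat.find h else Fintype.card V,
      ?_, ?_, ?_⟩
    · intro y; dsimp only; split
      · next h' => exact (find_lt_card h').le
      · exact le_rfl
    · simp only [dif_pos hRx]; exact find_lt_card hRx
    · intro y
      constructor
      · intro h0
        by_cases hR : ∃ m, PathTo E φ ψ y m
        · simp only [dif_pos hR] at h0
          obtain ⟨σ, hσ0, -, hψ, -⟩ := Nat.find_spec hR
          rw [h0] at hψ; rw [← hσ0]; exact hψ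
        · simp only [dif_neg hR] at h0; omega
      · intro h1 hlt
        by_cases hR : ∃ m, PathTo E φ ψ y m
        · simp only [dif_pos hR] at h1 hlt ⊢
          obtain ⟨hφy, y', hEy, h', hfind⟩ := pathTo_step hR h1
          refine ⟨hφy, y', hEy, ?_⟩
          simp only [dif_pos h']; exact hfind
        · simp only [dif_neg hR] at hlt; omega
  · rintro ⟨d, hdle, hdx, hd⟩
    choose sc hsc using hE
    suffices h : ∀ m (y : V), d y ≤ m → d y < Fintype.card V → SatEU E φ ψ y from
      h (d x) x le_rfl hdx
    intro m
    induction m with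
    | zero =>
      intro y hy _
      have hψy : ψ y := (hd y).1 (by omega)
      refine ⟨fun k => sc^[k] y, ?_, rfl, 0, hψy, fun j hj => absurd hj (Nat.not_lt_zero j)⟩
      intro k; show E (sc^[k] y) (sc^[k+1] y); rw [Function.iterate_succ_apply']; exact hsc _
    | succ m ih =>
      intro y hy hlt
      by_cases h0 : d y = 0
      · have hψy : ψ y := (hd y).1 h0
        refine ⟨fun k => sc^[k] y, ?_, rfl, 0, hψy, fun j hj => absurd hj (Nat.not_lt_zero j)⟩
        intro k; show E (sc^[k] y) (sc^[k+1] y); rw [Function.iterate_succ_apply']; exact hsc _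
      · have h1 : 1 ≤ d y := by omega
        obtain ⟨hφy, y', hEy, hdy'⟩ := (hd y).2 h1 hlt
        obtain ⟨ρ', hρ'E, hρ'0, i, hψi, hφi⟩ := ih y' (by omega) (by omega)
        refine ⟨fun k => Nat.rec y (fun k _ => ρ' k) k, ?_, rfl, i + 1, hψi, ?_⟩
        · intro k
          cases k with
          | zero => show E y (ρ' 0); rw [hρ'0]; exact hEy
          | succ k => exact hρ'E k
        · intro j hj
          cases j with
          | zero => exact hφy
          | succ j => exact hφi j (by omega)
end
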